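/- Let A be a Noetherian commutative ring and A_red its reduction. Then the map K_0(Coh(Spec A_red)) → K_0(Coh(Spec A)) induced by pushforward along the closed immersion is an isomorphism of abelian groups (dévissage). -/

import Mathlib

/-- A bundled finitely generated module over a ring `R`. -/
structure FGMod (R : Type) [Ring R] : Type 1 where
  carrier : Type
  [isAddCommGroup : AddCommGroup carrier]
  [isModule : Module R carrier]
  [isFinite : Module.Finite R carrier]

attribute [instance] FGMod.isAddCommGroup FGMod.isModule FGMod.isFinite

/-- The subgroup of relations defining `K₀` of the category of finitely generated
`R`-modules: for each short exact sequence `0 → A → B → C → 0`, the element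
`[B] - [A] - [C]`. -/
def K0Rel (R : Type) [Ring R] : AddSubgroup (FreeAbelianGroup (FGMod R)) :=
  AddSubgroup.closure
    {x | ∃ (M N P : FGMod R) (f : M.carrier →ₗ[R] N.carrier)
        (g : N.carrier →ₗ[R] P.carrier),
      Function.Injective f ∧ Function.Surjective g ∧
      LinearMap.range f = LinearMap.ker g ∧
      x = FreeAbelianGroup.of N - FreeAbelianGroup.of M - FreeAbelianGroup.of P}

/-- `K₀(Coh(Spec R))`: the Grothendieck group of finitely generated `R`-modules. -/
def K0 (R : Type) [Ring R] : Type 1 :=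
  FreeAbelianGroup (FGMod R) ⧸ K0Rel R

noncomputable instance (R : Type) [Ring R] : AddCommGroup (K0 R) :=
  QuotientAddGroup.Quotient.addCommGroup (K0Rel R)

/-- Restriction of scalars along `A → A ⧸ I` (pushforward of coherent sheaves along
the closed immersion `Spec (A ⧸ I) → Spec A`), on bundled f.g. modules. -/
noncomputable def FGMod.restrict (A : Type) [CommRing A] (I : Ideal A)
    (M : FGMod (A ⧸ I)) : FGMod A where
  carrier := RestrictScalars A (A ⧸ I) M.carrier
  isModule := RestrictScalars.module A (A ⧸ I) M.carrier
  isFinite := by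
    letI : Module (A ⧸ I) (RestrictScalars A (A ⧸ I) M.carrier) :=
      RestrictScalars.moduleOrig A (A ⧸ I) M.carrier
    letI : Module.Finite (A ⧸ I) (RestrictScalars A (A ⧸ I) M.carrier) := M.isFinite
    exact Module.Finite.trans (A ⧸ I) (RestrictScalars A (A ⧸ I) M.carrier)

section Basic

variable {R : Type} [Ring R]

/-- The class of a f.g. module in `K0 R`. -/
noncomputable def k0 (M : FGMod R) : K0 R :=
  QuotientAddGroup.mk (FreeAbelianGroup.of M)

theorem k0_additive {M N P : FGMod R} (f : M.carrier →ₗ[R] N.carrier)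
    (g : N.carrier →ₗ[R] P.carrier) (hf : Function.Injective f)
    (hg : Function.Surjective g) (hfg : LinearMap.range f = LinearMap.ker g) :
    k0 N = k0 M + k0 P := by
  have hmem : FreeAbelianGroup.of N - FreeAbelianGroup.of M - FreeAbelianGroup.of P ∈ K0Rel R :=
    AddSubgroup.subset_closure ⟨M, N, P, f, g, hf, hg, hfg, rfl⟩
  have : (QuotientAddGroup.mk (FreeAbelianGroup.of N - FreeAbelianGroup.of M
      - FreeAbelianGroup.of P) : K0 R) = 0 := (QuotientAddGroup.eq_zero_iff _).2 hmem
  have h2 : k0 N - k0 M - k0 P = 0 := this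
  rw [sub_sub, sub_eq_zero] at h2
  rw [h2]

theorem k0_zero (M : FGMod R) (h : Subsingleton M.carrier) : k0 M = 0 := by
  have h1 : k0 M = k0 M + k0 M := by
    refine k0_additive (LinearMap.id) (LinearMap.id) (fun a b _ => Subsingleton.elim a b)
      (fun a => ⟨a, rfl⟩) ?_
    apply Submodule.ext
    intro x
    simp [Subsingleton.elim x 0]
  exact left_eq_add.mp h1

end Basic

section Basic2
variable {R : Type} [Ring R]

/-- The zero module as an `FGMod`. -/
noncomputable def FGMod.zero (R : Type) [Ring R] : FGMod R := ⟨PUnit⟩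

instance : Subsingleton (FGMod.zero R).carrier := inferInstanceAs (Subsingleton PUnit)

theorem k0_congr {M N : FGMod R} (e : M.carrier ≃ₗ[R] N.carrier) : k0 M = k0 N := by
  have : k0 N = k0 M + k0 (FGMod.zero R) := by
    refine k0_additive (e : M.carrier →ₗ[R] N.carrier) 0 e.injective
      (fun a => ⟨0, Subsingleton.elim _ _⟩) ?_
    rw [LinearMap.ker_zero, LinearMap.range_eq_top]
    exact e.surjective
  rw [this, k0_zero (FGMod.zero R) inferInstance, add_zero]

variable [IsNoetherianRing R]

noncomputable instance fgmodSubFinite {M : Type} [AddCommGroup M] [Module R M]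
    [Module.Finite R M] (p : Submodule R M) : Module.Finite R p := by
  haveI : IsNoetherian R M := isNoetherian_of_isNoetherianRing_of_finite R M
  exact Module.Finite.iff_fg.mpr (IsNoetherian.noetherian p)

/-- Additivity of `k0` for a submodule and its quotient. -/
theorem k0_sub_quot (M : FGMod R) (p : Submodule R M.carrier) :
    k0 M = k0 ⟨p⟩ + k0 ⟨M.carrier ⧸ p⟩ := by
  refine k0_additive (M := ⟨p⟩) (P := ⟨M.carrier ⧸ p⟩) p.subtype p.mkQ
    p.injective_subtype p.mkQ_surjective ?_
  rw [Submodule.ker_mkQ, Submodule.range_subtype]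

end Basic2

section Red
variable {A : Type} [CommRing A]

theorem finite_red (X : Type) [AddCommGroup X] [Module A X] [Module.Finite A X]
    (hX : Module.IsTorsionBySet A X (nilradical A : Set A)) :
    letI := hX.module
    Module.Finite (A ⧸ nilradical A) X := by
  letI := hX.module
  haveI := Module.IsTorsionBySet.isScalarTower hX (S := A)
  exact Module.Finite.of_restrictScalars_finite A (A ⧸ nilradical A) X

/-- Reduce an `N`-torsion f.g. `A`-module to an f.g. `A ⧸ N`-module. -/
noncomputable def FGMod.red (X : Type) [AddCommGroup X] [Module A X] [Module.Finite A X]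
    (hX : Module.IsTorsionBySet A X (nilradical A : Set A)) : FGMod (A ⧸ nilradical A) :=
  letI := hX.module
  haveI := finite_red X hX
  ⟨X⟩

variable {X Y Z : Type} [AddCommGroup X] [Module A X] [Module.Finite A X]
  [AddCommGroup Y] [Module A Y] [Module.Finite A Y]
  [AddCommGroup Z] [Module A Z] [Module.Finite A Z]
  (hX : Module.IsTorsionBySet A X (nilradical A : Set A))
  (hY : Module.IsTorsionBySet A Y (nilradical A : Set A))
  (hZ : Module.IsTorsionBySet A Z (nilradical A : Set A))

/-- An `A`-linear map between torsion modules, as an `A⧸N`-linear map. -/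
noncomputable def reduceHom (f : X →ₗ[A] Y) :
    (FGMod.red X hX).carrier →ₗ[A ⧸ nilradical A] (FGMod.red Y hY).carrier where
  toFun := f
  map_add' := f.map_add
  map_smul' := by
    intro c x
    obtain ⟨a, rfl⟩ := Ideal.Quotient.mk_surjective c
    letI := hX.module
    letI := hY.module
    show f (Ideal.Quotient.mk (nilradical A) a • x) = Ideal.Quotient.mk (nilradical A) a • f x
    exact f.map_smul a x

theorem k0_red_additive (f : X →ₗ[A] Y) (g : Y →ₗ[A] Z) (hf : Function.Injective f)
    (hg : Function.Surjective g) (hfg : LinearMap.range f = LinearMap.ker g) :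
    k0 (FGMod.red Y hY) = k0 (FGMod.red X hX) + k0 (FGMod.red Z hZ) := by
  refine k0_additive (reduceHom hX hY f) (reduceHom hY hZ g) hf hg ?_
  apply Submodule.ext
  intro x
  simp only [LinearMap.mem_range, LinearMap.mem_ker]
  have h := SetLike.ext_iff.mp hfg x
  exact h

theorem torsion_punit : Module.IsTorsionBySet A PUnit (nilradical A : Set A) :=
  fun _ _ => Subsingleton.elim _ _

theorem k0_red_congr (e : X ≃ₗ[A] Y) :
    k0 (FGMod.red X hX) = k0 (FGMod.red Y hY) := by
  have h : k0 (FGMod.red Y hY) = k0 (FGMod.red X hX) + k0 (FGMod.red PUnit torsion_punit) := by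
    refine k0_red_additive hX hY torsion_punit (e : X →ₗ[A] Y) 0 e.injective
      (fun a => ⟨0, Subsingleton.elim _ _⟩) ?_
    rw [LinearMap.ker_zero, LinearMap.range_eq_top]
    exact e.surjective
  rw [h, k0_zero (FGMod.red PUnit torsion_punit) (inferInstanceAs (Subsingleton PUnit)), add_zero]

end Red

section Psi
variable {A : Type} [CommRing A] [IsNoetherianRing A]

/-- Transfer of smul-vanishing into a submodule. -/
theorem kill_sub {M : Type} [AddCommGroup M] [Module A M] (I : Ideal A) (p : Submodule A M)
    (h : I • p = ⊥) : (I • ⊤ : Submodule A p) = ⊥ := by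
  have h1 : Submodule.map p.subtype (I • ⊤) = I • Submodule.map p.subtype ⊤ :=
    Submodule.map_smul'' I ⊤ p.subtype
  rw [Submodule.map_subtype_top, h, ← Submodule.map_bot p.subtype] at h1
  exact Submodule.map_injective_of_injective p.injective_subtype h1

theorem kill_quot {M : Type} [AddCommGroup M] [Module A M] (I : Ideal A) (p : Submodule A M)
    (h : (I • ⊤ : Submodule A M) = ⊥) : (I • ⊤ : Submodule A (M ⧸ p)) = ⊥ := by
  have h1 : Submodule.map p.mkQ (I • ⊤) = I • Submodule.map p.mkQ ⊤ :=
    Submodule.map_smul'' I ⊤ p.mkQ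
  rw [h, Submodule.map_bot, Submodule.map_top, Submodule.range_mkQ] at h1
  exact h1.symm

theorem subsingleton_of_top_eq_bot' {M : Type} [AddCommGroup M] [Module A M]
    (h : (⊤ : Submodule A M) = ⊥) : Subsingleton M := by
  refine subsingleton_of_forall_eq 0 fun x => ?_
  have : x ∈ (⊥ : Submodule A M) := h ▸ Submodule.mem_top
  simpa using this

theorem sub_subsingleton {M : Type} [AddCommGroup M] [Module A M] (h : Subsingleton M)
    (p : Submodule A M) : Subsingleton p :=
  ⟨fun a b => Subtype.ext (Subsingleton.elim _ _)⟩

theorem quot_subsingleton {M : Type} [AddCommGroup M] [Module A M] (h : Subsingleton M)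
    (p : Submodule A M) : Subsingleton (M ⧸ p) :=
  p.mkQ_surjective.subsingleton

/-- The torsion structure on the top grade. -/
theorem grade_torsion (M : Type) [AddCommGroup M] [Module A M] :
    Module.IsTorsionBySet A (M ⧸ (nilradical A • ⊤ : Submodule A M)) (nilradical A : Set A) :=
  Module.isTorsionBySet_quotient_ideal_smul M (nilradical A)

/-- Approximation to `ψ`: sum of the classes of the first `n` graded pieces of the
`N`-adic filtration. -/
noncomputable def psi : ℕ → FGMod A → K0 (A ⧸ nilradical A)
  | 0, _ => 0
  | n+1, M =>
      k0 (FGMod.red (M.carrier ⧸ (nilradical A • ⊤ : Submodule A M.carrier))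
        (grade_torsion M.carrier))
      + psi n ⟨(nilradical A • ⊤ : Submodule A M.carrier)⟩

theorem psi_subsingleton (n : ℕ) (M : FGMod A) (h : Subsingleton M.carrier) :
    psi n M = 0 := by
  induction n generalizing M with
  | zero => rfl
  | succ n ih =>
    show k0 _ + psi n _ = 0
    rw [ih _ (sub_subsingleton h _),
      k0_zero (FGMod.red (M.carrier ⧸ (nilradical A • ⊤ : Submodule A M.carrier))
        (grade_torsion M.carrier)) (quot_subsingleton h _),
      add_zero]

theorem psi_congr (n : ℕ) {M M' : FGMod A} (e : M.carrier ≃ₗ[A] M'.carrier) :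
    psi n M = psi n M' := by
  induction n generalizing M M' with
  | zero => rfl
  | succ n ih =>
    have hmap : Submodule.map (e : M.carrier →ₗ[A] M'.carrier)
        (nilradical A • ⊤ : Submodule A M.carrier) = (nilradical A • ⊤) := by
      rw [Submodule.map_smul'', Submodule.map_top, LinearEquiv.range]
    show k0 _ + psi n _ = k0 _ + psi n _
    congr 1
    · exact k0_red_congr _ _ (Submodule.Quotient.equiv _ _ e hmap)
    · exact ih ((e.submoduleMap _).trans (LinearEquiv.ofEq _ _ hmap))

theorem psi_stable (n : ℕ) (M : FGMod A)
    (h : (nilradical A ^ n • ⊤ : Submodule A M.carrier) = ⊥) :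
    psi n M = psi (n + 1) M := by
  induction n generalizing M with
  | zero =>
    rw [pow_zero, Ideal.one_eq_top, Submodule.top_smul] at h
    haveI := subsingleton_of_top_eq_bot' h
    rw [psi_subsingleton 0 M this, psi_subsingleton 1 M this]
  | succ n ih =>
    show k0 _ + psi n _ = k0 _ + psi (n+1) _
    congr 1
    apply ih
    apply kill_sub
    rw [← mul_smul, ← pow_succ]
    exact h

theorem psi_of_le {m n : ℕ} (hmn : m ≤ n) (M : FGMod A)
    (h : (nilradical A ^ m • ⊤ : Submodule A M.carrier) = ⊥) :
    psi m M = psi n M := by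
  induction n with
  | zero => rw [Nat.le_zero.mp hmn]
  | succ n ih =>
    rcases Nat.lt_or_ge m (n+1) with hl | hg
    · have hmn' : m ≤ n := Nat.lt_succ_iff.mp hl
      rw [ih hmn']
      apply psi_stable
      refine le_antisymm ?_ bot_le
      calc (nilradical A ^ n • ⊤ : Submodule A M.carrier)
          ≤ nilradical A ^ m • ⊤ := Submodule.smul_mono_left (Ideal.pow_le_pow_right hmn')
        _ = ⊥ := h
    · rw [Nat.le_antisymm hmn hg]

end Psi

section Helpers
variable {A : Type} [CommRing A] {M : Type} [AddCommGroup M] [Module A M]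

theorem map_mkQ_self (q : Submodule A M) : Submodule.map q.mkQ q = ⊥ := by
  refine le_antisymm ?_ bot_le
  rintro x ⟨y, hy, rfl⟩
  simpa using (Submodule.Quotient.mk_eq_zero q).mpr hy

/-- The image of `q` in `M ⧸ r` is isomorphic to `q ⧸ (q ∩ r)`. -/
noncomputable def imageEquiv (q r : Submodule A M) :
    (q ⧸ Submodule.comap q.subtype r) ≃ₗ[A] Submodule.map r.mkQ q := by
  refine (Submodule.quotEquivOfEq _ _ ?_).trans
    ((LinearMap.quotKerEquivRange (r.mkQ.comp q.subtype)).trans (LinearEquiv.ofEq _ _ ?_))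
  · rw [LinearMap.ker_comp, Submodule.ker_mkQ]
  · rw [LinearMap.range_comp, Submodule.range_subtype]

/-- `(M ⧸ r) ⧸ im q ≃ M ⧸ (q ⊔ r)`. -/
noncomputable def doubleQuotEquiv (q r : Submodule A M) :
    ((M ⧸ r) ⧸ Submodule.map r.mkQ q) ≃ₗ[A] M ⧸ (q ⊔ r) := by
  refine (Submodule.quotEquivOfEq _ (Submodule.map r.mkQ (q ⊔ r)) ?_).trans
    (Submodule.quotientQuotientEquivQuotient r (q ⊔ r) le_sup_right)
  rw [Submodule.map_sup, map_mkQ_self, sup_bot_eq]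

theorem torsion_sub {s : Set A} (h : Module.IsTorsionBySet A M s) (q : Submodule A M) :
    Module.IsTorsionBySet A q s := fun x a => Subtype.ext (by
      show (a : A) • (x : M) = (0 : M)
      exact h (x := (x : M)) (a := a))

theorem torsion_of_smul_top_eq_bot {I : Ideal A}
    (h : (I • ⊤ : Submodule A M) = ⊥) : Module.IsTorsionBySet A M (I : Set A) := by
  intro x a
  have : (a : A) • x ∈ (I • ⊤ : Submodule A M) := Submodule.smul_mem_smul a.2 Submodule.mem_top
  rw [h] at this
  simpa using this

theorem smul_top_eq_bot_of_torsion {I : Ideal A}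
    (h : Module.IsTorsionBySet A M (I : Set A)) : (I • ⊤ : Submodule A M) = ⊥ := by
  refine le_antisymm (Submodule.smul_le.mpr fun a ha x _ => ?_) bot_le
  simpa using h (x := x) (a := ⟨a, ha⟩)

theorem subsingleton_of_bot (q : Submodule A M) (h : q = ⊥) : Subsingleton q := by
  subst h
  exact ⟨fun a b => Subtype.ext (by
    have ha := (Submodule.mem_bot A).mp a.2
    have hb := (Submodule.mem_bot A).mp b.2
    rw [ha, hb])⟩

end Helpers

section Main
variable {A : Type} [CommRing A] [IsNoetherianRing A]

theorem killAll (n₀ : ℕ) (hn₀ : nilradical A ^ n₀ = ⊥) (X : Type) [AddCommGroup X]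
    [Module A X] : (nilradical A ^ n₀ • ⊤ : Submodule A X) = ⊥ := by
  rw [hn₀, Submodule.bot_smul]

theorem psi_unfold (n₀ : ℕ) (hn₀ : nilradical A ^ n₀ = ⊥) (M : FGMod A) :
    psi (n₀ + 1) M =
      k0 (FGMod.red (M.carrier ⧸ (nilradical A • ⊤ : Submodule A M.carrier))
        (grade_torsion M.carrier))
      + psi (n₀ + 1) (⟨(nilradical A • ⊤ : Submodule A M.carrier)⟩ : FGMod A) := by
  show k0 _ + psi n₀ _ = _
  rw [psi_of_le (Nat.le_succ n₀) _ (killAll n₀ hn₀ _)]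

theorem psi_of_torsion (n₀ : ℕ) (hn₀ : nilradical A ^ n₀ = ⊥) (M : FGMod A)
    (hM : Module.IsTorsionBySet A M.carrier (nilradical A : Set A)) :
    psi (n₀ + 1) M = k0 (FGMod.red M.carrier hM) := by
  rw [psi_unfold n₀ hn₀ M]
  have hbot := smul_top_eq_bot_of_torsion hM
  rw [psi_subsingleton _ _ (subsingleton_of_bot _ hbot), add_zero]
  exact k0_red_congr _ _ (Submodule.quotEquivOfEqBot _ hbot)

theorem psi_ses_of_sub (n₀ : ℕ) (hn₀ : nilradical A ^ n₀ = ⊥) {n : ℕ}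
    (H : ∀ (B : FGMod A), ((nilradical A) ^ n • ⊤ : Submodule A B.carrier) = ⊥ →
      ∀ p : Submodule A B.carrier,
      psi (n₀+1) B = psi (n₀+1) ⟨p⟩ + psi (n₀+1) ⟨B.carrier ⧸ p⟩)
    (X Y Z : FGMod A) (f : X.carrier →ₗ[A] Y.carrier) (g : Y.carrier →ₗ[A] Z.carrier)
    (hf : Function.Injective f) (hg : Function.Surjective g)
    (hfg : LinearMap.range f = LinearMap.ker g)
    (hY : ((nilradical A) ^ n • ⊤ : Submodule A Y.carrier) = ⊥) :
    psi (n₀+1) Y = psi (n₀+1) X + psi (n₀+1) Z := by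
  have e1 : psi (n₀+1) (⟨LinearMap.range f⟩ : FGMod A) = psi (n₀+1) X :=
    psi_congr _ (LinearEquiv.ofInjective f hf).symm
  have e2 : psi (n₀+1) (⟨Y.carrier ⧸ LinearMap.range f⟩ : FGMod A) = psi (n₀+1) Z :=
    psi_congr _ ((Submodule.quotEquivOfEq _ _ hfg).trans
      (LinearMap.quotKerEquivOfSurjective g hg))
  rw [H Y hY (LinearMap.range f), e1, e2]

theorem psi_main (n₀ : ℕ) (hn₀ : nilradical A ^ n₀ = ⊥) :
    ∀ (n : ℕ) (B : FGMod A), ((nilradical A) ^ n • ⊤ : Submodule A B.carrier) = ⊥ →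
    ∀ p : Submodule A B.carrier,
    psi (n₀+1) B = psi (n₀+1) ⟨p⟩ + psi (n₀+1) ⟨B.carrier ⧸ p⟩ := by
  intro n
  induction n with
  | zero =>
    intro B hB p
    rw [pow_zero, Ideal.one_eq_top, Submodule.top_smul] at hB
    have hs := subsingleton_of_top_eq_bot' hB
    rw [psi_subsingleton _ _ hs, psi_subsingleton _ _ (sub_subsingleton hs p),
      psi_subsingleton _ _ (quot_subsingleton hs p), add_zero]
  | succ n ih =>
    intro B hB p
    have hB' : (nilradical A ^ n • (nilradical A • ⊤) : Submodule A B.carrier) = ⊥ := by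
      rw [← mul_smul, ← pow_succ]; exact hB
    -- Notation: S = N•⊤ ⊆ B, P1 = S ∩ p (inside ↥p), PN = N•⊤ ⊆ ↥p
    -- (b) the SES P1 → S → S_C where S_C = N•⊤ of C := B⧸p
    have hSC : Submodule.map p.mkQ (nilradical A • ⊤ : Submodule A B.carrier)
        = (nilradical A • ⊤ : Submodule A (B.carrier ⧸ p)) := by
      rw [Submodule.map_smul'', Submodule.map_top, Submodule.range_mkQ]
    set S : Submodule A B.carrier := nilradical A • ⊤ with hSdef
    set P1 : Submodule A p := Submodule.comap p.subtype S with hP1def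
    set PN : Submodule A p := nilradical A • ⊤ with hPNdef
    -- (b): ψ(S) = ψ(P1) + ψ(S_C)
    have hb : psi (n₀+1) (⟨S⟩ : FGMod A)
        = psi (n₀+1) (⟨P1⟩ : FGMod A)
        + psi (n₀+1) (⟨(nilradical A • ⊤ : Submodule A (B.carrier ⧸ p))⟩ : FGMod A) := by
      refine psi_ses_of_sub n₀ hn₀ ih ⟨P1⟩ ⟨S⟩
        ⟨(nilradical A • ⊤ : Submodule A (B.carrier ⧸ p))⟩
        (LinearMap.codRestrict S (p.subtype.comp P1.subtype) (fun x => x.2))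
        (LinearMap.codRestrict _ (p.mkQ.comp S.subtype)
          (fun x => hSC ▸ Submodule.mem_map_of_mem x.2))
        ?_ ?_ ?_ (kill_sub _ _ hB')
      · intro a b hab
        have h2 := congrArg Subtype.val hab
        exact Subtype.ext (Subtype.ext h2)
      · rintro ⟨y, hy⟩
        rw [← hSC] at hy
        obtain ⟨s, hs, rfl⟩ := hy
        exact ⟨⟨s, hs⟩, Subtype.ext rfl⟩
      · apply Submodule.ext
        intro x
        simp only [LinearMap.mem_range, LinearMap.mem_ker]
        constructor
        · rintro ⟨y, rfl⟩
          apply Subtype.ext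
          show p.mkQ ((y : p) : B.carrier) = 0
          exact (Submodule.Quotient.mk_eq_zero p).mpr (y : p).2
        · intro hx
          have hx' : p.mkQ ((x : B.carrier)) = 0 := congrArg Subtype.val hx
          have hxp : (x : B.carrier) ∈ p := (Submodule.Quotient.mk_eq_zero p).mp hx'
          refine ⟨⟨⟨(x : B.carrier), hxp⟩, ?_⟩, ?_⟩
          · exact x.2
          · exact Subtype.ext rfl
    -- PN ≤ P1
    have hPN_le : PN ≤ P1 := by
      rw [hP1def, ← Submodule.map_le_iff_le_comap, hPNdef, Submodule.map_smul'',
        Submodule.map_subtype_top]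
      exact smul_mono_right _ le_top
    have hP1kill : (nilradical A ^ n • ⊤ : Submodule A P1) = ⊥ := by
      apply kill_sub
      have h2 : Submodule.map p.subtype P1 ≤ S := Submodule.map_comap_le _ _
      have h1 : Submodule.map p.subtype (nilradical A ^ n • P1) = ⊥ := by
        rw [Submodule.map_smul'']
        exact le_antisymm (le_trans (smul_mono_right _ h2) (le_of_eq hB')) bot_le
      rw [← Submodule.map_bot p.subtype] at h1
      exact Submodule.map_injective_of_injective p.injective_subtype h1
    -- (e): ψ(P1) = ψ(PN) + ψ(P1/PN)
    have he : psi (n₀+1) (⟨P1⟩ : FGMod A)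
        = psi (n₀+1) (⟨Submodule.comap P1.subtype PN⟩ : FGMod A)
        + psi (n₀+1) (⟨(P1 ⧸ Submodule.comap P1.subtype PN)⟩ : FGMod A) :=
      ih ⟨P1⟩ hP1kill (Submodule.comap P1.subtype PN)
    have he' : psi (n₀+1) (⟨Submodule.comap P1.subtype PN⟩ : FGMod A)
        = psi (n₀+1) (⟨PN⟩ : FGMod A) :=
      psi_congr _ (Submodule.comapSubtypeEquivOfLe hPN_le)
    -- torsion structures
    have tX2 : Module.IsTorsionBySet A ((p : Type) ⧸ P1) (nilradical A : Set A) := by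
      rw [Module.isTorsionBySet_quotient_iff]
      intro x r hr
      show p.subtype (r • x) ∈ S
      exact Submodule.smul_mem_smul hr Submodule.mem_top
    have tX4 : Module.IsTorsionBySet A ((P1 : Type) ⧸ Submodule.comap P1.subtype PN)
        (nilradical A : Set A) := by
      rw [Module.isTorsionBySet_quotient_iff]
      intro x r hr
      show P1.subtype (r • x) ∈ PN
      exact Submodule.smul_mem_smul hr Submodule.mem_top
    -- (c): class of grade(B) splits
    have hc : k0 (FGMod.red (B.carrier ⧸ S) (grade_torsion B.carrier))
        = k0 (FGMod.red (Submodule.map S.mkQ p)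
            (torsion_sub (grade_torsion B.carrier) (Submodule.map S.mkQ p)))
        + k0 (FGMod.red ((B.carrier ⧸ S) ⧸ Submodule.map S.mkQ p)
            ((grade_torsion B.carrier).quotient (Submodule.map S.mkQ p))) := by
      refine k0_red_additive _ _ _ (Submodule.map S.mkQ p).subtype (Submodule.map S.mkQ p).mkQ
        (Submodule.injective_subtype _) (Submodule.mkQ_surjective _) ?_
      rw [Submodule.ker_mkQ, Submodule.range_subtype]
    have hcW : k0 (FGMod.red (Submodule.map S.mkQ p)
            (torsion_sub (grade_torsion B.carrier) (Submodule.map S.mkQ p)))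
        = k0 (FGMod.red ((p : Type) ⧸ P1) tX2) :=
      k0_red_congr _ _ (imageEquiv p S).symm
    have hcQ : k0 (FGMod.red ((B.carrier ⧸ S) ⧸ Submodule.map S.mkQ p)
            ((grade_torsion B.carrier).quotient (Submodule.map S.mkQ p)))
        = k0 (FGMod.red ((B.carrier ⧸ p) ⧸ (nilradical A • ⊤ : Submodule A (B.carrier ⧸ p)))
            (grade_torsion (B.carrier ⧸ p))) := by
      have e1 : ((B.carrier ⧸ S) ⧸ Submodule.map S.mkQ p) ≃ₗ[A] B.carrier ⧸ (p ⊔ S) :=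
        doubleQuotEquiv p S
      have e2 : (B.carrier ⧸ (p ⊔ S)) ≃ₗ[A] B.carrier ⧸ (S ⊔ p) :=
        Submodule.quotEquivOfEq _ _ (sup_comm p S)
      have e3 : ((B.carrier ⧸ p) ⧸ Submodule.map p.mkQ S) ≃ₗ[A] B.carrier ⧸ (S ⊔ p) :=
        doubleQuotEquiv S p
      have e4 : ((B.carrier ⧸ p) ⧸ Submodule.map p.mkQ S) ≃ₗ[A]
          ((B.carrier ⧸ p) ⧸ (nilradical A • ⊤ : Submodule A (B.carrier ⧸ p))) :=
        Submodule.quotEquivOfEq _ _ hSC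
      exact k0_red_congr _ _ ((e1.trans e2).trans (e3.symm.trans e4))
    -- (f): class of grade(p) splits
    have hfP : k0 (FGMod.red ((p : Type) ⧸ PN) (grade_torsion (p : Type)))
        = k0 (FGMod.red (Submodule.map PN.mkQ P1)
            (torsion_sub (grade_torsion (p : Type)) (Submodule.map PN.mkQ P1)))
        + k0 (FGMod.red (((p : Type) ⧸ PN) ⧸ Submodule.map PN.mkQ P1)
            ((grade_torsion (p : Type)).quotient (Submodule.map PN.mkQ P1))) := by
      refine k0_red_additive _ _ _ (Submodule.map PN.mkQ P1).subtype (Submodule.map PN.mkQ P1).mkQ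
        (Submodule.injective_subtype _) (Submodule.mkQ_surjective _) ?_
      rw [Submodule.ker_mkQ, Submodule.range_subtype]
    have hfW : k0 (FGMod.red (Submodule.map PN.mkQ P1)
            (torsion_sub (grade_torsion (p : Type)) (Submodule.map PN.mkQ P1)))
        = k0 (FGMod.red ((P1 : Type) ⧸ Submodule.comap P1.subtype PN) tX4) :=
      k0_red_congr _ _ (imageEquiv P1 PN).symm
    have hfQ : k0 (FGMod.red (((p : Type) ⧸ PN) ⧸ Submodule.map PN.mkQ P1)
            ((grade_torsion (p : Type)).quotient (Submodule.map PN.mkQ P1)))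
        = k0 (FGMod.red ((p : Type) ⧸ P1) tX2) :=
      k0_red_congr _ _ ((doubleQuotEquiv P1 PN).trans
        (Submodule.quotEquivOfEq _ _ (sup_eq_left.mpr hPN_le)))
    -- ψ of the torsion module X4 is its class
    have hX4p : psi (n₀+1) (⟨(P1 ⧸ Submodule.comap P1.subtype PN)⟩ : FGMod A)
        = k0 (FGMod.red ((P1 : Type) ⧸ Submodule.comap P1.subtype PN) tX4) :=
      psi_of_torsion n₀ hn₀ _ tX4
    -- unfoldings
    have hA : psi (n₀+1) B = k0 (FGMod.red (B.carrier ⧸ S) (grade_torsion B.carrier))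
        + psi (n₀+1) (⟨S⟩ : FGMod A) := psi_unfold n₀ hn₀ B
    have hA' : psi (n₀+1) (⟨B.carrier ⧸ p⟩ : FGMod A)
        = k0 (FGMod.red ((B.carrier ⧸ p) ⧸ (nilradical A • ⊤ : Submodule A (B.carrier ⧸ p)))
            (grade_torsion (B.carrier ⧸ p)))
        + psi (n₀+1) (⟨(nilradical A • ⊤ : Submodule A (B.carrier ⧸ p))⟩ : FGMod A) :=
      psi_unfold n₀ hn₀ ⟨B.carrier ⧸ p⟩
    have hA'' : psi (n₀+1) (⟨p⟩ : FGMod A)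
        = k0 (FGMod.red ((p : Type) ⧸ PN) (grade_torsion (p : Type)))
        + psi (n₀+1) (⟨PN⟩ : FGMod A) := psi_unfold n₀ hn₀ ⟨p⟩
    rw [hA, hA', hA'', hb, he, he', hX4p, hc, hcW, hcQ, hfP, hfW, hfQ]
    abel

end Main

section Final
variable {A : Type} [CommRing A] [IsNoetherianRing A]

/-- An `A⧸N`-linear map, viewed as `A`-linear map between restrictions of scalars. -/
noncomputable def restrictMap {M N : FGMod (A ⧸ nilradical A)}
    (f : M.carrier →ₗ[A ⧸ nilradical A] N.carrier) :
    (FGMod.restrict A (nilradical A) M).carrier →ₗ[A]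
      (FGMod.restrict A (nilradical A) N).carrier where
  toFun := f
  map_add' := f.map_add
  map_smul' := fun a x => f.map_smul (algebraMap A (A ⧸ nilradical A) a) x

/-- The pushforward homomorphism `K0(A⧸N) → K0(A)`. -/
noncomputable def phiHom : K0 (A ⧸ nilradical A) →+ K0 A :=
  QuotientAddGroup.lift _
    (FreeAbelianGroup.lift (fun M => k0 (FGMod.restrict A (nilradical A) M))) (by
    rw [K0Rel, AddSubgroup.closure_le]
    rintro x ⟨M, N, P, f, g, hf, hg, hfg, rfl⟩
    show _ ∈ AddMonoidHom.ker _
    rw [AddMonoidHom.mem_ker]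
    simp only [map_sub, FreeAbelianGroup.lift_apply_of]
    have hr : LinearMap.range (restrictMap f) = LinearMap.ker (restrictMap g) := by
      apply Submodule.ext
      intro x
      simp only [LinearMap.mem_range, LinearMap.mem_ker]
      have h := SetLike.ext_iff.mp hfg x
      exact h
    have hk := k0_additive (restrictMap f) (restrictMap g) hf hg hr
    rw [hk]
    abel)

theorem phi_k0 (M : FGMod (A ⧸ nilradical A)) :
    phiHom (k0 M) = k0 (FGMod.restrict A (nilradical A) M) := by
  rfl

/-- The inverse homomorphism `K0(A) → K0(A⧸N)`. -/
noncomputable def psiHom (n₀ : ℕ) (hn₀ : nilradical A ^ n₀ = ⊥) :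
    K0 A →+ K0 (A ⧸ nilradical A) :=
  QuotientAddGroup.lift _ (FreeAbelianGroup.lift (fun M => psi (n₀ + 1) M)) (by
    rw [K0Rel, AddSubgroup.closure_le]
    rintro x ⟨M, N, P, f, g, hf, hg, hfg, rfl⟩
    show _ ∈ AddMonoidHom.ker _
    rw [AddMonoidHom.mem_ker]
    simp only [map_sub, FreeAbelianGroup.lift_apply_of]
    have hk := psi_ses_of_sub n₀ hn₀ (psi_main n₀ hn₀ n₀) M N P f g hf hg hfg
      (killAll n₀ hn₀ N.carrier)
    rw [hk]
    abel)

theorem psi_k0 (n₀ : ℕ) (hn₀ : nilradical A ^ n₀ = ⊥) (M : FGMod A) :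
    psiHom n₀ hn₀ (k0 M) = psi (n₀ + 1) M := by
  have h1 : psiHom n₀ hn₀ (k0 M)
      = FreeAbelianGroup.lift (fun M => psi (n₀ + 1) M) (FreeAbelianGroup.of M) := rfl
  rw [h1, FreeAbelianGroup.lift_apply_of]

/-- Restriction of scalars of a reduced module is `A`-linearly the same module. -/
noncomputable def restrictRedEquiv (X : Type) [AddCommGroup X] [Module A X] [Module.Finite A X]
    (hX : Module.IsTorsionBySet A X (nilradical A : Set A)) :
    (FGMod.restrict A (nilradical A) (FGMod.red X hX)).carrier ≃ₗ[A] X where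
  toFun := fun x => x
  invFun := fun x => x
  map_add' := fun _ _ => rfl
  map_smul' := fun a x => rfl
  left_inv := fun _ => rfl
  right_inv := fun _ => rfl

theorem phi_psi (n₀ : ℕ) (hn₀ : nilradical A ^ n₀ = ⊥) :
    ∀ (n : ℕ) (M : FGMod A), ((nilradical A) ^ n • ⊤ : Submodule A M.carrier) = ⊥ →
    phiHom (psi n M) = k0 M := by
  intro n
  induction n with
  | zero =>
    intro M hM
    rw [pow_zero, Ideal.one_eq_top, Submodule.top_smul] at hM
    show phiHom 0 = k0 M
    rw [map_zero, k0_zero M (subsingleton_of_top_eq_bot' hM)]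
  | succ n ih =>
    intro M hM
    have hB' : (nilradical A ^ n • (nilradical A • ⊤) : Submodule A M.carrier) = ⊥ := by
      rw [← mul_smul, ← pow_succ]; exact hM
    show phiHom (k0 _ + psi n _) = k0 M
    have hq : k0 (FGMod.restrict A (nilradical A)
          (FGMod.red (M.carrier ⧸ (nilradical A • ⊤ : Submodule A M.carrier))
            (grade_torsion M.carrier)))
        = k0 (⟨M.carrier ⧸ (nilradical A • ⊤ : Submodule A M.carrier)⟩ : FGMod A) :=
      k0_congr (restrictRedEquiv (M.carrier ⧸ (nilradical A • ⊤ : Submodule A M.carrier))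
        (grade_torsion M.carrier))
    rw [map_add, phi_k0, ih _ (kill_sub _ _ hB'), hq,
      k0_sub_quot M (nilradical A • ⊤ : Submodule A M.carrier)]
    abel

/-- Restriction of scalars is `N`-torsion. -/
theorem restrict_torsion (M : FGMod (A ⧸ nilradical A)) :
    Module.IsTorsionBySet A (FGMod.restrict A (nilradical A) M).carrier
      (nilradical A : Set A) := by
  intro x a
  letI : Module (A ⧸ nilradical A) (FGMod.restrict A (nilradical A) M).carrier :=
    RestrictScalars.moduleOrig A (A ⧸ nilradical A) M.carrier
  show (algebraMap A (A ⧸ nilradical A) (a : A)) • x = 0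
  have h0 : algebraMap A (A ⧸ nilradical A) (a : A) = 0 := by
    rw [Ideal.Quotient.algebraMap_eq]
    exact Ideal.Quotient.eq_zero_iff_mem.mpr a.2
  rw [h0, zero_smul]

/-- Reducing the restriction recovers the original module. -/
noncomputable def redRestrictEquiv (M : FGMod (A ⧸ nilradical A)) :
    (FGMod.red (FGMod.restrict A (nilradical A) M).carrier
      (restrict_torsion M)).carrier ≃ₗ[A ⧸ nilradical A] M.carrier where
  toFun := fun x => x
  invFun := fun x => x
  map_add' := fun _ _ => rfl
  map_smul' := by
    intro c x
    obtain ⟨a, rfl⟩ := Ideal.Quotient.mk_surjective c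
    rfl
  left_inv := fun _ => rfl
  right_inv := fun _ => rfl

theorem psi_phi (n₀ : ℕ) (hn₀ : nilradical A ^ n₀ = ⊥) (M : FGMod (A ⧸ nilradical A)) :
    psiHom n₀ hn₀ (phiHom (k0 M)) = k0 M := by
  rw [phi_k0, psi_k0, psi_of_torsion n₀ hn₀ _ (restrict_torsion M)]
  exact k0_congr (redRestrictEquiv M)

end Final


/-- dévissage: for a Noetherian commutative ring `A` with reduction
`A_red = A ⧸ nilradical A`, pushforward along the closed immersion
`Spec A_red → Spec A` (i.e. restriction of scalars) induces an isomorphism of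
abelian groups `K₀(Coh(Spec A_red)) ≅ K₀(Coh(Spec A))`. -/
theorem devissage_K0_reduction (A : Type) [CommRing A] [IsNoetherianRing A] :
    ∃ φ : K0 (A ⧸ nilradical A) →+ K0 A,
      Function.Bijective φ ∧
      ∀ M : FGMod (A ⧸ nilradical A),
        φ (QuotientAddGroup.mk (FreeAbelianGroup.of M)) =
          QuotientAddGroup.mk
            (FreeAbelianGroup.of (FGMod.restrict A (nilradical A) M)) := by
  obtain ⟨n₀, hn₀⟩ := IsNoetherianRing.isNilpotent_nilradical A
  refine ⟨phiHom, ?_, fun M => phi_k0 M⟩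
  have hcomp1 : (psiHom n₀ hn₀).comp phiHom = AddMonoidHom.id _ := by
    apply QuotientAddGroup.addMonoidHom_ext
    apply FreeAbelianGroup.lift_ext
    intro M
    show psiHom n₀ hn₀ (phiHom (k0 M)) = k0 M
    exact psi_phi n₀ hn₀ M
  have hcomp2 : phiHom.comp (psiHom n₀ hn₀) = AddMonoidHom.id _ := by
    apply QuotientAddGroup.addMonoidHom_ext
    apply FreeAbelianGroup.lift_ext
    intro M
    show phiHom (psiHom n₀ hn₀ (k0 M)) = k0 M
    rw [psi_k0]
    refine phi_psi n₀ hn₀ (n₀ + 1) M ?_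
    refine le_antisymm (le_trans (Submodule.smul_mono_left
      (Ideal.pow_le_pow_right (Nat.le_succ n₀))) (le_of_eq (killAll n₀ hn₀ _))) bot_le
  have hleft : ∀ y, psiHom n₀ hn₀ (phiHom y) = y := fun y =>
    congrArg (fun (h : K0 (A ⧸ nilradical A) →+ K0 (A ⧸ nilradical A)) => h y) hcomp1
  have hright : ∀ x, phiHom (psiHom n₀ hn₀ x) = x := fun x =>
    congrArg (fun (h : K0 A →+ K0 A) => h x) hcomp2
  exact ⟨Function.LeftInverse.injective hleft, Function.RightInverse.surjective hright⟩
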